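/- arXiv:2506.01052 — 9 statements merged into one kernel-verified Lean document; each statement's English description precedes it below -/
import Mathlib

section
/- Suppose θ* ∈ EuclideanSpace ℝ (Fin d) satisfies ḡ(θ*) = 0. Then for every θ ∈ EuclideanSpace ℝ (Fin d), ⟨−ḡ(θ), θ − θ*⟩ = (1−γ)·‖V_θ − V_{θ*}‖_D² + γ·‖V_θ − V_{θ*}‖_Dir². -/
open scoped RealInnerProductSpace
open Finset

theorem stmt_0 (n d : ℕ) (hn : 1 ≤ n) (hd : 1 ≤ d)
    (γ : ℝ) (hγ : γ ∈ Set.Ioo (0 : ℝ) 1)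
    (P : Fin n → Fin n → ℝ)
    (hP0 : ∀ s s', 0 ≤ P s s') (hP1 : ∀ s, ∑ s', P s s' = 1)
    (π : Fin n → ℝ)
    (hπ0 : ∀ s, 0 ≤ π s) (hπ1 : ∑ s, π s = 1)
    (hstat : ∀ s', ∑ s, π s * P s s' = π s')
    (r : Fin n → Fin n → ℝ)
    (φ : Fin n → EuclideanSpace ℝ (Fin d))
    (g : EuclideanSpace ℝ (Fin d) → Fin n → Fin n → EuclideanSpace ℝ (Fin d))
    (hg : ∀ θ s s', g θ s s' = (r s s' + γ * ⟪φ s', θ⟫ - ⟪φ s, θ⟫) • φ s)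
    (gbar : EuclideanSpace ℝ (Fin d) → EuclideanSpace ℝ (Fin d))
    (hgbar : ∀ θ, gbar θ = ∑ s, ∑ s', (π s * P s s') • g θ s s')
    (θstar : EuclideanSpace ℝ (Fin d)) (hfix : gbar θstar = 0)
    (θ : EuclideanSpace ℝ (Fin d)) :
    ⟪-gbar θ, θ - θstar⟫ =
      (1 - γ) * (∑ s, π s * (⟪φ s, θ⟫ - ⟪φ s, θstar⟫) ^ 2) +
      γ * ((1 / 2) * ∑ s, ∑ s', π s * P s s' *
        ((⟪φ s', θ⟫ - ⟪φ s', θstar⟫) - (⟪φ s, θ⟫ - ⟪φ s, θstar⟫)) ^ 2) := by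
  set Δ : Fin n → ℝ := fun s => ⟪φ s, θ⟫ - ⟪φ s, θstar⟫ with hΔ
  have hinner : ∀ s : Fin n, ⟪φ s, θ - θstar⟫ = Δ s := by
    intro s; simp [hΔ, inner_sub_right]
  have expand : ∀ ψ : EuclideanSpace ℝ (Fin d), ⟪gbar ψ, θ - θstar⟫ =
      ∑ s, ∑ s', π s * P s s' * ((r s s' + γ * ⟪φ s', ψ⟫ - ⟪φ s, ψ⟫) * Δ s) := by
    intro ψ
    rw [hgbar, sum_inner]
    refine sum_congr rfl fun s _ => ?_
    rw [sum_inner]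
    refine sum_congr rfl fun s' _ => ?_
    rw [hg, real_inner_smul_left, real_inner_smul_left, hinner]
  have key : ⟪-gbar θ, θ - θstar⟫ =
      ∑ s, ∑ s', π s * P s s' * ((Δ s - γ * Δ s') * Δ s) := by
    have h0 : ⟪gbar θstar, θ - θstar⟫ = (0 : ℝ) := by
      rw [hfix]; simp
    have h1 : ⟪-gbar θ, θ - θstar⟫ = ⟪gbar θstar, θ - θstar⟫ - ⟪gbar θ, θ - θstar⟫ := by
      rw [h0, inner_neg_left]; ring
    rw [h1, expand, expand, ← Finset.sum_sub_distrib]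
    refine sum_congr rfl fun s _ => ?_
    rw [← Finset.sum_sub_distrib]
    refine sum_congr rfl fun s' _ => ?_
    simp only [hΔ]
    ring
  rw [key]
  have hA : ∑ s, ∑ s', π s * P s s' * (Δ s) ^ 2 = ∑ s, π s * (Δ s) ^ 2 := by
    refine sum_congr rfl fun s _ => ?_
    have : ∑ s', π s * P s s' * (Δ s) ^ 2 = (∑ s', P s s') * (π s * (Δ s) ^ 2) := by
      rw [Finset.sum_mul]
      exact sum_congr rfl fun s' _ => by ring
    rw [this, hP1, one_mul]
  have hB : ∑ s, ∑ s', π s * P s s' * (Δ s') ^ 2 = ∑ s, π s * (Δ s) ^ 2 := by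
    rw [Finset.sum_comm]
    refine sum_congr rfl fun s' _ => ?_
    have : ∑ s, π s * P s s' * (Δ s') ^ 2 = (∑ s, π s * P s s') * (Δ s') ^ 2 := by
      rw [Finset.sum_mul]
    rw [this, hstat]
  have hL : ∑ s, ∑ s', π s * P s s' * ((Δ s - γ * Δ s') * Δ s) =
      (∑ s, ∑ s', π s * P s s' * (Δ s) ^ 2) -
        γ * ∑ s, ∑ s', π s * P s s' * (Δ s * Δ s') := by
    rw [Finset.mul_sum, ← Finset.sum_sub_distrib]
    refine sum_congr rfl fun s _ => ?_
    rw [Finset.mul_sum, ← Finset.sum_sub_distrib]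
    refine sum_congr rfl fun s' _ => ?_
    ring
  have hDir : ∑ s, ∑ s', π s * P s s' * (Δ s' - Δ s) ^ 2 =
      (∑ s, ∑ s', π s * P s s' * (Δ s) ^ 2) +
        (∑ s, ∑ s', π s * P s s' * (Δ s') ^ 2) -
        2 * ∑ s, ∑ s', π s * P s s' * (Δ s * Δ s') := by
    rw [Finset.mul_sum, ← Finset.sum_add_distrib, ← Finset.sum_sub_distrib]
    refine sum_congr rfl fun s _ => ?_
    rw [Finset.mul_sum, ← Finset.sum_add_distrib, ← Finset.sum_sub_distrib]
    refine sum_congr rfl fun s' _ => ?_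
    ring
  linear_combination hL - (γ / 2) * hDir + (1 - γ / 2) * hA - (γ / 2) * hB
end

section
/- Assume ‖φ s‖ ≤ φ∞ for all s, 0 ≤ γ ≤ 1, P s s' ≥ 0 with ∑_{s'} P s s' = 1 for every s, and π s ≥ 0 with ∑_s π s = 1. Then for all θ, θ' ∈ EuclideanSpace ℝ (Fin d), ‖ḡ(θ) − ḡ(θ')‖ ≤ 2·φ∞²·‖θ − θ'‖. -/
/-! The reward cancels in `ḡ θ - ḡ θ'`, leaving a convex combination (weights `π s * P s s'`) of
vectors `(γ ⟪φ s', θ - θ'⟫ - ⟪φ s, θ - θ'⟫) • φ s`, each of norm at most `2 φ∞² ‖θ - θ'‖` by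
Cauchy–Schwarz and `|γ| ≤ 1`; a convex combination stays in that ball. -/

open scoped RealInnerProductSpace
open Finset

lemma norm_sum_smul_le_of_sum_eq_one {ι E : Type*} [Fintype ι] [SeminormedAddCommGroup E]
    [NormedSpace ℝ E] {w : ι → ℝ} (hw0 : ∀ i, 0 ≤ w i) (hw1 : ∑ i, w i = 1) {x : ι → E}
    {C : ℝ} (hx : ∀ i, ‖x i‖ ≤ C) : ‖∑ i, w i • x i‖ ≤ C :=
  mem_closedBall_zero_iff.1 <| (convex_closedBall 0 C).sum_mem (fun i _ => hw0 i) hw1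
    fun i _ => mem_closedBall_zero_iff.2 (hx i)

section TemporalDifference

variable {E : Type*} [NormedAddCommGroup E] [InnerProductSpace ℝ E]

lemma td_update_sub (r γ : ℝ) (a b θ θ' : E) :
    (r + γ * ⟪a, θ⟫ - ⟪b, θ⟫) • b - (r + γ * ⟪a, θ'⟫ - ⟪b, θ'⟫) • b
      = (γ * ⟪a, θ - θ'⟫ - ⟪b, θ - θ'⟫) • b := by
  rw [← sub_smul, inner_sub_right, inner_sub_right]
  congr 1
  ring

lemma norm_td_update_le {γ φinf : ℝ} (hγ : |γ| ≤ 1) {a b : E} (ha : ‖a‖ ≤ φinf)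
    (hb : ‖b‖ ≤ φinf) (v : E) :
    ‖(γ * ⟪a, v⟫ - ⟪b, v⟫) • b‖ ≤ 2 * φinf ^ 2 * ‖v‖ := by
  have hav : |γ * ⟪a, v⟫| ≤ φinf * ‖v‖ :=
    calc |γ * ⟪a, v⟫| = |γ| * |⟪a, v⟫| := abs_mul _ _
      _ ≤ 1 * (‖a‖ * ‖v‖) := by gcongr; exact abs_real_inner_le_norm a v
      _ ≤ φinf * ‖v‖ := by rw [one_mul]; gcongr
  have hbv : |⟪b, v⟫| ≤ φinf * ‖v‖ :=
    (abs_real_inner_le_norm b v).trans (by gcongr)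
  have hφinf : 0 ≤ φinf := (norm_nonneg b).trans hb
  calc ‖(γ * ⟪a, v⟫ - ⟪b, v⟫) • b‖ = |γ * ⟪a, v⟫ - ⟪b, v⟫| * ‖b‖ := by
        rw [norm_smul, Real.norm_eq_abs]
    _ ≤ (φinf * ‖v‖ + φinf * ‖v‖) * φinf := by
        gcongr
        exact (abs_sub _ _).trans (add_le_add hav hbv)
    _ = 2 * φinf ^ 2 * ‖v‖ := by ring

end TemporalDifference

theorem stmt_3_general (n d : ℕ)
    (γ : ℝ) (hγ0 : 0 ≤ γ) (hγ1 : γ ≤ 1)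
    (P : Fin n → Fin n → ℝ)
    (hP0 : ∀ s s', 0 ≤ P s s') (hP1 : ∀ s, ∑ s', P s s' = 1)
    (π : Fin n → ℝ)
    (hπ0 : ∀ s, 0 ≤ π s) (hπ1 : ∑ s, π s = 1)
    (r : Fin n → Fin n → ℝ)
    (φ : Fin n → EuclideanSpace ℝ (Fin d))
    (φinf : ℝ)
    (hφ : ∀ s, ‖φ s‖ ≤ φinf)
    (g : EuclideanSpace ℝ (Fin d) → Fin n → Fin n → EuclideanSpace ℝ (Fin d))
    (hg : ∀ θ s s', g θ s s' = (r s s' + γ * ⟪φ s', θ⟫ - ⟪φ s, θ⟫) • φ s)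
    (gbar : EuclideanSpace ℝ (Fin d) → EuclideanSpace ℝ (Fin d))
    (hgbar : ∀ θ, gbar θ = ∑ s, ∑ s', (π s * P s s') • g θ s s')
    (θ θ' : EuclideanSpace ℝ (Fin d)) :
    ‖gbar θ - gbar θ'‖ ≤ 2 * φinf ^ 2 * ‖θ - θ'‖ := by
  have hγ : |γ| ≤ 1 := abs_le.2 ⟨by linarith, hγ1⟩
  have hdiff : gbar θ - gbar θ' = ∑ s, π s • ∑ s', P s s' •
      (γ * ⟪φ s', θ - θ'⟫ - ⟪φ s, θ - θ'⟫) • φ s := by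
    simp only [hgbar, hg, ← sum_sub_distrib, ← smul_sub, td_update_sub, smul_sum, mul_smul]
  rw [hdiff]
  exact norm_sum_smul_le_of_sum_eq_one hπ0 hπ1 fun s =>
    norm_sum_smul_le_of_sum_eq_one (hP0 s) (hP1 s) fun s' =>
      norm_td_update_le hγ (hφ s') (hφ s) _

theorem stmt_3 (n d : ℕ) (hn : 1 ≤ n) (hd : 1 ≤ d)
    (γ : ℝ) (hγ0 : 0 ≤ γ) (hγ1 : γ ≤ 1)
    (P : Fin n → Fin n → ℝ)
    (hP0 : ∀ s s', 0 ≤ P s s') (hP1 : ∀ s, ∑ s', P s s' = 1)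
    (π : Fin n → ℝ)
    (hπ0 : ∀ s, 0 ≤ π s) (hπ1 : ∑ s, π s = 1)
    (r : Fin n → Fin n → ℝ)
    (φ : Fin n → EuclideanSpace ℝ (Fin d))
    (φinf : ℝ) (hφinf : 0 ≤ φinf)
    (hφ : ∀ s, ‖φ s‖ ≤ φinf)
    (g : EuclideanSpace ℝ (Fin d) → Fin n → Fin n → EuclideanSpace ℝ (Fin d))
    (hg : ∀ θ s s', g θ s s' = (r s s' + γ * ⟪φ s', θ⟫ - ⟪φ s, θ⟫) • φ s)
    (gbar : EuclideanSpace ℝ (Fin d) → EuclideanSpace ℝ (Fin d))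
    (hgbar : ∀ θ, gbar θ = ∑ s, ∑ s', (π s * P s s') • g θ s s')
    (θ θ' : EuclideanSpace ℝ (Fin d)) :
    ‖gbar θ - gbar θ'‖ ≤ 2 * φinf ^ 2 * ‖θ - θ'‖ :=
  stmt_3_general n d γ hγ0 hγ1 P hP0 hP1 π hπ0 hπ1 r φ φinf hφ g hg gbar hgbar θ θ'
end

section
/- Assume ‖φ s‖ ≤ φ∞ for all s, 0 ≤ γ ≤ 1, P s s' ≥ 0 with ∑_{s'} P s s' = 1 for every s, and π s ≥ 0 with ∑_s π s = 1. Fix θ* ∈ EuclideanSpace ℝ (Fin d) and a transition (s₀,s₁), and define Ξ(θ) := ⟨g(θ,s₀,s₁) − ḡ(θ), θ − θ*⟩. Let θ, θ' ∈ EuclideanSpace ℝ (Fin d), let G ≥ 0 satisfy ‖g(θ,s,s')‖ ≤ G for all transitions (s,s'), and let d' := ‖θ' − θ*‖. Then |Ξ(θ) − Ξ(θ')| ≤ (2·G + 4·φ∞²·d')·‖θ − θ'‖. -/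
open scoped RealInnerProductSpace
open Finset

theorem stmt_4 (n d : ℕ) (hn : 1 ≤ n) (hd : 1 ≤ d)
    (γ : ℝ) (hγ0 : 0 ≤ γ) (hγ1 : γ ≤ 1)
    (P : Fin n → Fin n → ℝ)
    (hP0 : ∀ s s', 0 ≤ P s s') (hP1 : ∀ s, ∑ s', P s s' = 1)
    (π : Fin n → ℝ)
    (hπ0 : ∀ s, 0 ≤ π s) (hπ1 : ∑ s, π s = 1)
    (r : Fin n → Fin n → ℝ)
    (φ : Fin n → EuclideanSpace ℝ (Fin d))
    (φinf : ℝ) (hφinf : 0 ≤ φinf)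
    (hφ : ∀ s, ‖φ s‖ ≤ φinf)
    (g : EuclideanSpace ℝ (Fin d) → Fin n → Fin n → EuclideanSpace ℝ (Fin d))
    (hg : ∀ θ s s', g θ s s' = (r s s' + γ * ⟪φ s', θ⟫ - ⟪φ s, θ⟫) • φ s)
    (gbar : EuclideanSpace ℝ (Fin d) → EuclideanSpace ℝ (Fin d))
    (hgbar : ∀ θ, gbar θ = ∑ s, ∑ s', (π s * P s s') • g θ s s')
    (θstar : EuclideanSpace ℝ (Fin d)) (s₀ s₁ : Fin n)
    (Ξ : EuclideanSpace ℝ (Fin d) → ℝ)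
    (hΞ : ∀ θ, Ξ θ = ⟪g θ s₀ s₁ - gbar θ, θ - θstar⟫)
    (θ θ' : EuclideanSpace ℝ (Fin d))
    (G : ℝ) (hG0 : 0 ≤ G) (hG : ∀ s s', ‖g θ s s'‖ ≤ G)
    (d' : ℝ) (hd' : d' = ‖θ' - θstar‖) :
    |Ξ θ - Ξ θ'| ≤ (2 * G + 4 * φinf ^ 2 * d') * ‖θ - θ'‖ := by
  -- per-transition Lipschitz bound on g
  have hglip : ∀ s s' : Fin n, ‖g θ s s' - g θ' s s'‖ ≤ 2 * φinf ^ 2 * ‖θ - θ'‖ := by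
    intro s s'
    have hdiff : g θ s s' - g θ' s s'
        = (γ * ⟪φ s', θ - θ'⟫ - ⟪φ s, θ - θ'⟫) • φ s := by
      rw [hg, hg, ← sub_smul]
      congr 1
      rw [inner_sub_right, inner_sub_right]
      ring
    rw [hdiff, norm_smul]
    have h1 : |γ * ⟪φ s', θ - θ'⟫ - ⟪φ s, θ - θ'⟫| ≤ 2 * φinf * ‖θ - θ'‖ := by
      have ha : |γ * ⟪φ s', θ - θ'⟫| ≤ φinf * ‖θ - θ'‖ := by
        rw [abs_mul]
        calc |γ| * |⟪φ s', θ - θ'⟫| ≤ 1 * (‖φ s'‖ * ‖θ - θ'‖) := by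
              apply mul_le_mul (by rw [abs_of_nonneg hγ0]; exact hγ1)
                (abs_real_inner_le_norm _ _) (abs_nonneg _) zero_le_one
          _ ≤ φinf * ‖θ - θ'‖ := by
              rw [one_mul]
              exact mul_le_mul_of_nonneg_right (hφ s') (norm_nonneg _)
      have hb : |⟪φ s, θ - θ'⟫| ≤ φinf * ‖θ - θ'‖ :=
        le_trans (abs_real_inner_le_norm _ _)
          (mul_le_mul_of_nonneg_right (hφ s) (norm_nonneg _))
      calc |γ * ⟪φ s', θ - θ'⟫ - ⟪φ s, θ - θ'⟫|
          ≤ |γ * ⟪φ s', θ - θ'⟫| + |⟪φ s, θ - θ'⟫| := abs_sub _ _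
        _ ≤ φinf * ‖θ - θ'‖ + φinf * ‖θ - θ'‖ := add_le_add ha hb
        _ = 2 * φinf * ‖θ - θ'‖ := by ring
    calc |γ * ⟪φ s', θ - θ'⟫ - ⟪φ s, θ - θ'⟫| * ‖φ s‖
        ≤ (2 * φinf * ‖θ - θ'‖) * φinf := by
          apply mul_le_mul h1 (hφ s) (norm_nonneg _)
          positivity
      _ = 2 * φinf ^ 2 * ‖θ - θ'‖ := by ring
  have hw1 : ∑ s, ∑ s', π s * P s s' = 1 := by
    rw [← hπ1]
    refine Finset.sum_congr rfl fun s _ => ?_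
    rw [← Finset.mul_sum, hP1, mul_one]
  have hw0 : ∀ s s' : Fin n, 0 ≤ π s * P s s' := fun s s' =>
    mul_nonneg (hπ0 s) (hP0 s s')
  -- convex-combination bound helper
  have hconv : ∀ (B : ℝ) (v : Fin n → Fin n → EuclideanSpace ℝ (Fin d)),
      (∀ s s', ‖v s s'‖ ≤ B) →
      ‖∑ s, ∑ s', (π s * P s s') • v s s'‖ ≤ B := by
    intro B v hv
    calc ‖∑ s, ∑ s', (π s * P s s') • v s s'‖
        ≤ ∑ s, ∑ s', ‖(π s * P s s') • v s s'‖ := by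
          refine le_trans (norm_sum_le _ _) ?_
          exact Finset.sum_le_sum fun s _ => norm_sum_le _ _
      _ ≤ ∑ s, ∑ s', (π s * P s s') * B := by
          refine Finset.sum_le_sum fun s _ => Finset.sum_le_sum fun s' _ => ?_
          rw [norm_smul, Real.norm_eq_abs, abs_of_nonneg (hw0 s s')]
          exact mul_le_mul_of_nonneg_left (hv s s') (hw0 s s')
      _ = (∑ s, ∑ s', π s * P s s') * B := by
          rw [Finset.sum_mul]
          exact Finset.sum_congr rfl fun s _ => (Finset.sum_mul _ _ _).symm
      _ = B := by rw [hw1, one_mul]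
  have hgbarG : ‖gbar θ‖ ≤ G := by
    rw [hgbar]; exact hconv G _ hG
  have hgbarlip : ‖gbar θ - gbar θ'‖ ≤ 2 * φinf ^ 2 * ‖θ - θ'‖ := by
    rw [hgbar, hgbar, ← Finset.sum_sub_distrib]
    have : ∀ s : Fin n, (∑ s', (π s * P s s') • g θ s s') - ∑ s', (π s * P s s') • g θ' s s'
        = ∑ s', (π s * P s s') • (g θ s s' - g θ' s s') := by
      intro s
      rw [← Finset.sum_sub_distrib]
      exact Finset.sum_congr rfl fun s' _ => (smul_sub _ _ _).symm
    simp only [this]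
    exact hconv _ _ hglip
  set Δ := g θ s₀ s₁ - gbar θ with hΔ
  set Δ' := g θ' s₀ s₁ - gbar θ' with hΔ'
  have hΔG : ‖Δ‖ ≤ 2 * G := by
    calc ‖Δ‖ ≤ ‖g θ s₀ s₁‖ + ‖gbar θ‖ := norm_sub_le _ _
      _ ≤ G + G := add_le_add (hG s₀ s₁) hgbarG
      _ = 2 * G := by ring
  have hΔΔ' : ‖Δ - Δ'‖ ≤ 4 * φinf ^ 2 * ‖θ - θ'‖ := by
    have : Δ - Δ' = (g θ s₀ s₁ - g θ' s₀ s₁) - (gbar θ - gbar θ') := by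
      rw [hΔ, hΔ']; abel
    rw [this]
    calc ‖(g θ s₀ s₁ - g θ' s₀ s₁) - (gbar θ - gbar θ')‖
        ≤ ‖g θ s₀ s₁ - g θ' s₀ s₁‖ + ‖gbar θ - gbar θ'‖ := norm_sub_le _ _
      _ ≤ 2 * φinf ^ 2 * ‖θ - θ'‖ + 2 * φinf ^ 2 * ‖θ - θ'‖ :=
          add_le_add (hglip s₀ s₁) hgbarlip
      _ = 4 * φinf ^ 2 * ‖θ - θ'‖ := by ring
  have key : ∀ (u v x y z : EuclideanSpace ℝ (Fin d)),
      ⟪u, x - z⟫ - ⟪v, y - z⟫ = ⟪u, x - y⟫ + ⟪u - v, y - z⟫ := by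
    intro u v x y z
    simp only [inner_sub_left, inner_sub_right]
    ring
  have hsplit : Ξ θ - Ξ θ' = ⟪Δ, θ - θ'⟫ + ⟪Δ - Δ', θ' - θstar⟫ := by
    rw [hΞ, hΞ, ← hΔ, ← hΔ']
    exact key Δ Δ' θ θ' θstar
  rw [hsplit]
  calc |⟪Δ, θ - θ'⟫ + ⟪Δ - Δ', θ' - θstar⟫|
      ≤ |⟪Δ, θ - θ'⟫| + |⟪Δ - Δ', θ' - θstar⟫| := abs_add_le _ _
    _ ≤ ‖Δ‖ * ‖θ - θ'‖ + ‖Δ - Δ'‖ * ‖θ' - θstar‖ :=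
        add_le_add (abs_real_inner_le_norm _ _) (abs_real_inner_le_norm _ _)
    _ ≤ (2 * G) * ‖θ - θ'‖ + (4 * φinf ^ 2 * ‖θ - θ'‖) * d' := by
        rw [hd']
        exact add_le_add (mul_le_mul_of_nonneg_right hΔG (norm_nonneg _))
          (mul_le_mul_of_nonneg_right hΔΔ' (norm_nonneg _))
    _ = (2 * G + 4 * φinf ^ 2 * d') * ‖θ - θ'‖ := by ring
end

section
/- For all natural numbers u and t with u < t, ∑_{k=u+1}^{t−1} 1/(log(k+3)·log(k−u+3)·√(k+1)·√(k−u+1)) ≤ 2/log 3. -/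
/-!
By AM-GM, `1 / (a b) ≤ (1 / a² + 1 / b²) / 2` splits each summand into a term depending on `k`
only and one depending on `k - u` only. Both are of the form `1 / ((x + 1) log² (x + 3))` with
`x ≥ 1`, which is at most the telescoping difference `2 / log (x + 2) - 2 / log (x + 3)`, because
`log (x + 3) - log (x + 2) ≥ 1 / (x + 3)`. Each of the two telescoping sums is then at most
`2 / log 3`.
-/

open Finset Real

lemma one_div_mul_le_mean_one_div_sq {K : Type*} [Field K] [LinearOrder K] [IsStrictOrderedRing K]
    (a b : K) : 1 / (a * b) ≤ (1 / a ^ 2 + 1 / b ^ 2) / 2 :=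
  calc 1 / (a * b) = 2 * (1 / a) * (1 / b) / 2 := by ring
    _ ≤ ((1 / a) ^ 2 + (1 / b) ^ 2) / 2 := by gcongr; exact two_mul_le_add_sq _ _
    _ = (1 / a ^ 2 + 1 / b ^ 2) / 2 := by ring

lemma sum_Ico_sub_succ_le {M : Type*} [AddCommGroup M] [LinearOrder M] [IsOrderedAddMonoid M]
    {m : ℕ} (n : ℕ) (f : ℕ → M) (hf : ∀ k, m ≤ k → 0 ≤ f k) :
    ∑ k ∈ Ico m n, (f k - f (k + 1)) ≤ f m := by
  rcases le_total m n with hmn | hnm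
  · have htel : ∑ k ∈ Ico m n, (f k - f (k + 1)) = f m - f n := by
      rw [← neg_sub (f n), ← sum_Ico_sub f hmn, ← sum_neg_distrib]
      simp only [neg_sub]
    rw [htel]
    exact sub_le_self _ (hf n hmn)
  · rw [Ico_eq_empty_of_le hnm, sum_empty]
    exact hf m le_rfl

namespace Real

lemma one_div_add_one_le_log_add_one_sub_log {y : ℝ} (hy : 0 < y) :
    1 / (y + 1) ≤ log (y + 1) - log y := by
  have h := one_sub_inv_le_log_of_pos (x := (y + 1) / y) (by positivity)
  rw [log_div (by positivity) hy.ne', inv_div] at h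
  calc 1 / (y + 1) = 1 - y / (y + 1) := by field_simp; ring
    _ ≤ log (y + 1) - log y := h

lemma one_div_mul_log_sq_le_sub {x : ℝ} (hx : 1 ≤ x) :
    1 / ((x + 1) * log (x + 3) ^ 2) ≤ 2 / log (x + 2) - 2 / log (x + 3) := by
  have hL₁ : 0 < log (x + 2) := log_pos (by linarith)
  have hL₂ : 0 < log (x + 3) := log_pos (by linarith)
  have hL₁₂ : log (x + 2) ≤ log (x + 3) := log_le_log (by linarith) (by linarith)
  have hgap : 1 / (x + 3) ≤ log (x + 3) - log (x + 2) := by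
    simpa [add_assoc, one_add_one_eq_two, two_add_one_eq_three] using
      one_div_add_one_le_log_add_one_sub_log (y := x + 2) (by linarith)
  calc 1 / ((x + 1) * log (x + 3) ^ 2) ≤ 2 / ((x + 3) * log (x + 3) ^ 2) := by
        rw [div_le_div_iff₀ (by positivity) (by positivity)]
        nlinarith [sq_nonneg (log (x + 3))]
    _ ≤ 2 / ((x + 3) * (log (x + 2) * log (x + 3))) := by gcongr; nlinarith
    _ = 2 * (1 / (x + 3)) / (log (x + 2) * log (x + 3)) := by rw [mul_one_div, div_div]
    _ ≤ 2 * (log (x + 3) - log (x + 2)) / (log (x + 2) * log (x + 3)) := by gcongr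
    _ = 2 / log (x + 2) - 2 / log (x + 3) := by field_simp

end Real

lemma one_div_log_mul_log_mul_sqrt_mul_sqrt_le {x y : ℝ} (hx : 1 ≤ x) (hy : 1 ≤ y) :
    1 / (log (x + 3) * log (y + 3) * √(x + 1) * √(y + 1)) ≤
      ((2 / log (x + 2) - 2 / log (x + 3)) + (2 / log (y + 2) - 2 / log (y + 3))) / 2 := by
  have hsq : ∀ z : ℝ, 1 ≤ z → (log (z + 3) * √(z + 1)) ^ 2 = (z + 1) * log (z + 3) ^ 2 := by
    intro z hz
    rw [mul_pow, sq_sqrt (by linarith), mul_comm]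
  calc 1 / (log (x + 3) * log (y + 3) * √(x + 1) * √(y + 1))
        = 1 / ((log (x + 3) * √(x + 1)) * (log (y + 3) * √(y + 1))) := by ring_nf
    _ ≤ (1 / (log (x + 3) * √(x + 1)) ^ 2 + 1 / (log (y + 3) * √(y + 1)) ^ 2) / 2 :=
        one_div_mul_le_mean_one_div_sq _ _
    _ ≤ _ := by
        rw [hsq x hx, hsq y hy]
        gcongr <;> exact one_div_mul_log_sq_le_sub ‹_›

theorem stmt_5_general (u t : ℕ) :
    ∑ k ∈ Finset.Ico (u + 1) t,
      1 / (Real.log (k + 3) * Real.log ((k : ℝ) - u + 3) *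
        Real.sqrt (k + 1) * Real.sqrt ((k : ℝ) - u + 1)) ≤
    2 / Real.log 3 := by
  set f₁ : ℕ → ℝ := fun j => 2 / log ((j : ℝ) + 2)
  set f₂ : ℕ → ℝ := fun j => 2 / log ((j : ℝ) - u + 2)
  have hf : ∀ k, u + 1 ≤ k → 0 ≤ f₁ k ∧ 0 ≤ f₂ k := by
    intro k hk
    have hk' : (u : ℝ) + 1 ≤ k := by exact_mod_cast hk
    exact ⟨div_nonneg zero_le_two (log_nonneg (by linarith)),
      div_nonneg zero_le_two (log_nonneg (by linarith))⟩
  calc _ ≤ ∑ k ∈ Ico (u + 1) t, ((f₁ k - f₁ (k + 1)) + (f₂ k - f₂ (k + 1))) / 2 := by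
        refine sum_le_sum fun k hk => ?_
        have hk' : (u : ℝ) + 1 ≤ k := by exact_mod_cast (mem_Ico.mp hk).1
        refine (one_div_log_mul_log_mul_sqrt_mul_sqrt_le (x := k) (y := (k : ℝ) - u)
          (by linarith) (by linarith)).trans_eq ?_
        simp only [f₁, f₂]
        push_cast
        ring_nf
    _ = ((∑ k ∈ Ico (u + 1) t, (f₁ k - f₁ (k + 1))) +
          ∑ k ∈ Ico (u + 1) t, (f₂ k - f₂ (k + 1))) / 2 := by
        rw [← sum_add_distrib, sum_div]
    _ ≤ (f₁ (u + 1) + f₂ (u + 1)) / 2 := by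
        gcongr
        · exact sum_Ico_sub_succ_le t f₁ fun k hk => (hf k hk).1
        · exact sum_Ico_sub_succ_le t f₂ fun k hk => (hf k hk).2
    _ ≤ 2 / log 3 := by
        have h₁ : f₁ (u + 1) ≤ 2 / log 3 := by
          refine div_le_div_of_nonneg_left zero_le_two (log_pos (by norm_num)) ?_
          exact log_le_log (by norm_num) (by push_cast; linarith [(u.cast_nonneg : (0 : ℝ) ≤ u)])
        have h₂ : f₂ (u + 1) = 2 / log 3 := by
          simp only [f₂]; push_cast; ring_nf
        linarith

theorem stmt_5 (u t : ℕ) (hut : u < t) :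
    ∑ k ∈ Finset.Ico (u + 1) t,
      1 / (Real.log (k + 3) * Real.log ((k : ℝ) - u + 3) *
        Real.sqrt (k + 1) * Real.sqrt ((k : ℝ) - u + 1)) ≤
    2 / Real.log 3 :=
  stmt_5_general u t
end

section
/- For all natural numbers u and t with u < t, ∑_{k=u+1}^{t−1} 1/(log(k+3)·√(k+1)·√t) ≤ 2/log(u+4). -/
open Finset Real

theorem stmt_6 (u t : ℕ) (hut : u < t) :
    ∑ k ∈ Finset.Ico (u + 1) t,
      1 / (Real.log (k + 3) * Real.sqrt (k + 1) * Real.sqrt t) ≤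
    2 / Real.log (u + 4) := by
  have hL : 0 < Real.log (u + 4) := Real.log_pos (by push_cast; linarith)
  have ht : (0:ℝ) < (t:ℝ) := by exact_mod_cast Nat.lt_of_le_of_lt (Nat.zero_le u) hut
  have hs : (0:ℝ) < Real.sqrt t := Real.sqrt_pos.2 ht
  have key : ∀ k ∈ Finset.Ico (u+1) t,
      1 / (Real.log (k + 3) * Real.sqrt (k + 1) * Real.sqrt t)
        ≤ 2 * (Real.sqrt (k+1) - Real.sqrt k) / (Real.log (u+4) * Real.sqrt t) := by
    intro k hk
    obtain ⟨hk1, hk2⟩ := Finset.mem_Ico.1 hk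
    have hku : (u:ℝ) + 1 ≤ (k:ℝ) := by exact_mod_cast hk1
    have hlog : Real.log (u+4) ≤ Real.log (k+3) := by
      apply Real.log_le_log (by positivity); linarith
    have hM : (0:ℝ) < Real.log (k+3) := lt_of_lt_of_le hL hlog
    have hb : (0:ℝ) < Real.sqrt (k+1) := Real.sqrt_pos.2 (by positivity)
    have ha : (0:ℝ) ≤ Real.sqrt k := Real.sqrt_nonneg _
    have hsa : Real.sqrt k ^ 2 = (k:ℝ) := Real.sq_sqrt (by positivity)
    have hsb : Real.sqrt (k+1) ^ 2 = (k:ℝ)+1 := Real.sq_sqrt (by positivity)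
    have h1 : 1 ≤ 2 * (Real.sqrt (k+1) - Real.sqrt k) * Real.sqrt (k+1) := by
      nlinarith [sq_nonneg (Real.sqrt (k+1) - Real.sqrt k)]
    rw [div_le_div_iff₀ (by positivity) (by positivity)]
    nlinarith [mul_le_mul_of_nonneg_right h1 (mul_pos hM hs).le,
      mul_le_mul_of_nonneg_right hlog hs.le, mul_pos hM hs]
  have htel : ∑ k ∈ Finset.Ico (u+1) t, (Real.sqrt (k+1) - Real.sqrt k)
      = Real.sqrt t - Real.sqrt (u+1) := by
    have : ∀ n : ℕ, ∑ k ∈ Finset.range n, (Real.sqrt (k+1) - Real.sqrt k)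
        = Real.sqrt n - Real.sqrt 0 := by
      intro n
      have := Finset.sum_range_sub (fun m : ℕ => Real.sqrt m) n
      simpa [Nat.cast_add] using this
    rw [Finset.sum_Ico_eq_sub _ (by omega), this t, this (u+1)]
    push_cast
    ring
  calc ∑ k ∈ Finset.Ico (u + 1) t,
      1 / (Real.log (k + 3) * Real.sqrt (k + 1) * Real.sqrt t)
      ≤ ∑ k ∈ Finset.Ico (u+1) t,
        2 * (Real.sqrt (k+1) - Real.sqrt k) / (Real.log (u+4) * Real.sqrt t) :=
      Finset.sum_le_sum key
    _ = 2 * (Real.sqrt t - Real.sqrt (u+1)) / (Real.log (u+4) * Real.sqrt t) := by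
      rw [← Finset.sum_div, ← Finset.mul_sum, htel]
    _ ≤ 2 * Real.sqrt t / (Real.log (u+4) * Real.sqrt t) := by
      gcongr
      have := Real.sqrt_nonneg ((u:ℝ)+1); linarith
    _ = 2 / Real.log (u+4) := by
      rw [mul_comm (Real.log (u+4)) (Real.sqrt t)]
      rw [← div_div, mul_div_assoc, div_self hs.ne', mul_one]
end

section
/- For every natural number t ≥ 1, ∑_{k=0}^{t−1} 1/((log(k+3))²·(k+1)) ≤ 1/(log 3)² + 2/log 3 − 2/log(t+2); in particular this sum is strictly less than 3. -/
open Finset Real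

lemma exp_one_le_three' : Real.exp 1 ≤ 3 :=
  le_of_lt (lt_trans Real.exp_one_lt_d9 (by norm_num))

lemma one_le_log' {x : ℝ} (hx : 3 ≤ x) : 1 ≤ Real.log x := by
  rw [Real.le_log_iff_exp_le (by linarith)]
  exact exp_one_le_three'.trans hx

lemma key' (t : ℕ) (ht : 1 ≤ t) :
    1 / ((Real.log ((t:ℝ) + 3)) ^ 2 * ((t:ℝ) + 1)) ≤
      2 / Real.log ((t:ℝ) + 2) - 2 / Real.log ((t:ℝ) + 3) := by
  have ht1 : (1:ℝ) ≤ t := by exact_mod_cast ht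
  set a := Real.log ((t:ℝ) + 2) with hadef
  set b := Real.log ((t:ℝ) + 3) with hbdef
  have ha : 1 ≤ a := one_le_log' (by linarith)
  have hb : 1 ≤ b := one_le_log' (by linarith)
  have hab : a ≤ b := Real.log_le_log (by linarith) (by linarith)
  have hdiff : 1 / ((t:ℝ)+3) ≤ b - a := by
    have hy : (0:ℝ) < ((t:ℝ)+2)/((t:ℝ)+3) := by positivity
    have h1 := Real.log_le_sub_one_of_pos hy
    rw [Real.log_div (by linarith) (by linarith)] at h1
    have h2 : ((t:ℝ)+2)/((t:ℝ)+3) - 1 = -(1/((t:ℝ)+3)) := by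
      field_simp
      norm_num
    rw [h2] at h1
    rw [hadef, hbdef]
    linarith
  have heq : 2/a - 2/b = 2*(b-a)/(a*b) := by
    field_simp
  rw [heq, div_le_div_iff₀ (by positivity) (by positivity)]
  have hd2 : 1 ≤ ((t:ℝ)+3) * (b - a) := by
    have h3 := mul_le_mul_of_nonneg_left hdiff (by positivity : (0:ℝ) ≤ (t:ℝ)+3)
    have h4 : ((t:ℝ)+3) * (1/((t:ℝ)+3)) = 1 := by field_simp
    linarith
  have hbpos : (0:ℝ) < b := by linarith
  have h5 : 1 * (2*b^2*((t:ℝ)+1)) ≤ (((t:ℝ)+3)*(b-a)) * (2*b^2*((t:ℝ)+1)) :=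
    mul_le_mul_of_nonneg_right hd2 (by positivity)
  have h6 : ((t:ℝ)+3)*(a*b) ≤ ((t:ℝ)+3)*(b*b) := by nlinarith
  have hgoal : ((t:ℝ)+3) * (1*(a*b)) ≤ ((t:ℝ)+3) * (2*(b-a)*(b^2*((t:ℝ)+1))) := by
    nlinarith [mul_nonneg (sq_nonneg b) (show (0:ℝ) ≤ (t:ℝ)-1 by linarith)]
  exact le_of_mul_le_mul_left hgoal (by positivity)

theorem stmt_7 (t : ℕ) (ht : 1 ≤ t) :
    (∑ k ∈ Finset.range t, 1 / ((Real.log (k + 3)) ^ 2 * (k + 1)) ≤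
      1 / (Real.log 3) ^ 2 + 2 / Real.log 3 - 2 / Real.log (t + 2)) ∧
    (∑ k ∈ Finset.range t, 1 / ((Real.log (k + 3)) ^ 2 * (k + 1)) < 3) := by
  have hL : 1 ≤ Real.log 3 := one_le_log' (by norm_num)
  have main : ∀ n : ℕ, 1 ≤ n →
      ∑ k ∈ Finset.range n, 1 / ((Real.log (k + 3)) ^ 2 * (k + 1)) ≤
        1 / (Real.log 3) ^ 2 + 2 / Real.log 3 - 2 / Real.log (n + 2) := by
    intro n hn
    induction n, hn using Nat.le_induction with
    | base =>
      simp only [Finset.sum_range_one]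
      norm_num
    | succ m hm ih =>
      rw [Finset.sum_range_succ]
      have hk := key' m hm
      have hcast : ((m:ℝ) + 1) + 2 = (m:ℝ) + 3 := by ring
      push_cast
      push_cast at ih hk
      rw [hcast]
      linarith
  have h1 := main t ht
  refine ⟨h1, lt_of_le_of_lt h1 ?_⟩
  have hL2 : 1 ≤ Real.log ((t:ℝ) + 2) := by
    have : (3:ℝ) ≤ (t:ℝ) + 2 := by
      have : (1:ℝ) ≤ t := by exact_mod_cast ht
      linarith
    exact one_le_log' this
  have h2 : 0 < 2 / Real.log ((t:ℝ) + 2) := by positivity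
  have h3 : 1 / (Real.log 3) ^ 2 ≤ 1 := by
    rw [div_le_one (by positivity)]
    nlinarith
  have h4 : 2 / Real.log 3 ≤ 2 := by
    rw [div_le_iff₀ (by linarith)]
    linarith
  linarith
end

section
/- Suppose π is a probability vector stationary for the row-stochastic matrix P. Define f(θ) := (1−γ)·‖V_θ − V_{θ*}‖_D² + γ·‖V_θ − V_{θ*}‖_Dir² for a fixed θ* ∈ EuclideanSpace ℝ (Fin d). Let Φ be the n×d matrix whose s-th row is φ(s)ᵀ, let D := diag(π), W := (1/2)·(D·P + Pᵀ·D), L := D − W, and M := Φᵀ·((1−γ)·D + γ·L)·Φ. Then for every θ: (i) f(θ) = (θ−θ*)ᵀ·M·(θ−θ*), and (ii) f is differentiable at θ with gradient ∇f(θ) = 2·M·(θ−θ*). -/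
open scoped RealInnerProductSpace
open Finset Matrix

/-!
With `v := Φ (θ - θ*)`, i.e. `v s = V_θ s - V_θ* s`, stationarity of `π` and row-stochasticity
of `P` turn the Dirichlet form into the Laplacian quadratic form `vᵀ L v`, so
`f θ = vᵀ ((1 - γ) D + γ L) v = (θ - θ*)ᵀ M (θ - θ*)`. Since `M` is symmetric, the
derivative `h ↦ ⟪h, M (θ - θ*)⟫ + ⟪θ - θ*, M h⟫` of this quadratic form is `⟪2 M (θ - θ*), h⟫`.
-/

theorem Matrix.dotProduct_mulVec_eq_sum_sum {ι : Type*} [Fintype ι] (M : Matrix ι ι ℝ)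
    (u : ι → ℝ) : u ⬝ᵥ (M *ᵥ u) = ∑ i, ∑ j, u i * M i j * u j := by
  simp only [dotProduct, mulVec, mul_sum, mul_assoc]

theorem hasGradientAt_inner_sub_apply_sub {E : Type*} [NormedAddCommGroup E]
    [InnerProductSpace ℝ E] [CompleteSpace E] {T : E →L[ℝ] E}
    (hT : (T : E →ₗ[ℝ] E).IsSymmetric) (c x : E) :
    HasGradientAt (fun y => ⟪y - c, T (y - c)⟫) ((2 : ℝ) • T (x - c)) x := by
  have hsub : HasFDerivAt (fun y => y - c) (ContinuousLinearMap.id ℝ E) x :=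
    (hasFDerivAt_id x).sub_const c
  rw [hasGradientAt_iff_hasFDerivAt]
  refine (hsub.inner ℝ (T.hasFDerivAt.comp x hsub)).congr_fderiv ?_
  ext h
  have hTh : ⟪T (x - c), h⟫ = ⟪x - c, T h⟫ := hT (x - c) h
  simp only [ContinuousLinearMap.coe_comp, Function.comp_apply, fderivInnerCLM_apply,
    InnerProductSpace.toDual_apply_apply, ContinuousLinearMap.prod_apply,
    ContinuousLinearMap.id_apply, real_inner_smul_left]
  rw [← hTh, real_inner_comm h]
  ring

theorem Matrix.IsHermitian.hasGradientAt_sum_sum {ι : Type*} [Fintype ι] [DecidableEq ι]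
    {M : Matrix ι ι ℝ} (hM : M.IsHermitian) (c x : EuclideanSpace ℝ ι) :
    HasGradientAt (fun y : EuclideanSpace ℝ ι => ∑ i, ∑ j, (y i - c i) * M i j * (y j - c j))
      (WithLp.toLp 2 ((2 : ℝ) • M *ᵥ fun j => x j - c j)) x := by
  have hT : ((toEuclideanCLM (𝕜 := ℝ) M : EuclideanSpace ℝ ι →L[ℝ] EuclideanSpace ℝ ι) :
      EuclideanSpace ℝ ι →ₗ[ℝ] EuclideanSpace ℝ ι).IsSymmetric := by
    rwa [coe_toEuclideanCLM_eq_toEuclideanLin, isSymmetric_toEuclideanLin_iff]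
  convert hasGradientAt_inner_sub_apply_sub hT c x using 1
  · funext y
    rw [inner_toEuclideanCLM, dotProduct_mulVec_eq_sum_sum]
    rfl
  · rfl

namespace Matrix

variable {ι : Type*} [Fintype ι] (P : Matrix ι ι ℝ) (π : ι → ℝ)

theorem half_sum_sum_mul_sub_sq (hP : ∀ s, ∑ t, P s t = 1)
    (hπ : ∀ t, ∑ s, π s * P s t = π t) (v : ι → ℝ) :
    1 / 2 * ∑ s, ∑ t, π s * P s t * (v t - v s) ^ 2 =
      ∑ s, π s * v s ^ 2 - ∑ s, ∑ t, π s * P s t * v s * v t := by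
  have h_out : ∑ s, ∑ t, π s * P s t * v s ^ 2 = ∑ s, π s * v s ^ 2 := by
    refine sum_congr rfl fun s _ => ?_
    rw [← sum_mul, ← mul_sum, hP, mul_one]
  have h_in : ∑ s, ∑ t, π s * P s t * v t ^ 2 = ∑ s, π s * v s ^ 2 := by
    rw [sum_comm]
    exact sum_congr rfl fun t _ => by rw [← sum_mul, hπ]
  have h_expand : ∑ s, ∑ t, π s * P s t * (v t - v s) ^ 2 =
      ∑ s, ∑ t, π s * P s t * v t ^ 2 + ∑ s, ∑ t, π s * P s t * v s ^ 2 -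
        2 * ∑ s, ∑ t, π s * P s t * v s * v t := by
    simp only [mul_sum, ← sum_add_distrib, ← sum_sub_distrib]
    exact sum_congr rfl fun s _ => sum_congr rfl fun t _ => by ring
  rw [h_expand, h_in, h_out]
  ring

variable [DecidableEq ι]

noncomputable def markovLaplacian : Matrix ι ι ℝ :=
  diagonal π - (1 / 2 : ℝ) • (diagonal π * P + Pᵀ * diagonal π)

theorem isHermitian_markovLaplacian : (markovLaplacian P π).IsHermitian := by
  refine (isHermitian_diagonal π).sub (IsHermitian.smul ?_ (IsSelfAdjoint.all _))
  simp only [IsHermitian, conjTranspose_eq_transpose_of_trivial, transpose_add, transpose_mul,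
    transpose_transpose, diagonal_transpose, add_comm]

theorem dotProduct_diagonal_mulVec (v : ι → ℝ) :
    v ⬝ᵥ (diagonal π *ᵥ v) = ∑ s, π s * v s ^ 2 := by
  simp only [dotProduct, mulVec_diagonal]
  exact sum_congr rfl fun s _ => by ring

theorem dotProduct_diagonal_mul_mulVec (v : ι → ℝ) :
    v ⬝ᵥ ((diagonal π * P) *ᵥ v) = ∑ s, ∑ t, π s * P s t * v s * v t := by
  rw [dotProduct_mulVec_eq_sum_sum]
  simp only [diagonal_mul]
  exact sum_congr rfl fun s _ => sum_congr rfl fun t _ => by ring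

theorem dotProduct_markovLaplacian_mulVec (hP : ∀ s, ∑ t, P s t = 1)
    (hπ : ∀ t, ∑ s, π s * P s t = π t) (v : ι → ℝ) :
    v ⬝ᵥ (markovLaplacian P π *ᵥ v) = 1 / 2 * ∑ s, ∑ t, π s * P s t * (v t - v s) ^ 2 := by
  have h_transpose : v ⬝ᵥ ((Pᵀ * diagonal π) *ᵥ v) = v ⬝ᵥ ((diagonal π * P) *ᵥ v) := by
    rw [← dotProduct_transpose_mulVec, transpose_mul, diagonal_transpose, transpose_transpose]
  rw [half_sum_sum_mul_sub_sq P π hP hπ, markovLaplacian, sub_mulVec, smul_mulVec, add_mulVec,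
    dotProduct_sub, dotProduct_smul, dotProduct_add, h_transpose, dotProduct_diagonal_mulVec,
    dotProduct_diagonal_mul_mulVec, smul_eq_mul]
  ring

end Matrix

theorem stmt_9_general (n d : ℕ)
    (γ : ℝ)
    (P : Matrix (Fin n) (Fin n) ℝ)
    (hP1 : ∀ s, ∑ s', P s s' = 1)
    (π : Fin n → ℝ)
    (hstat : ∀ s', ∑ s, π s * P s s' = π s')
    (φ : Fin n → EuclideanSpace ℝ (Fin d))
    (θstar : EuclideanSpace ℝ (Fin d))
    (f : EuclideanSpace ℝ (Fin d) → ℝ)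
    (hf : ∀ θ, f θ =
      (1 - γ) * (∑ s, π s * (⟪φ s, θ⟫ - ⟪φ s, θstar⟫) ^ 2) +
      γ * ((1 / 2) * ∑ s, ∑ s', π s * P s s' *
        ((⟪φ s', θ⟫ - ⟪φ s', θstar⟫) - (⟪φ s, θ⟫ - ⟪φ s, θstar⟫)) ^ 2))
    (Φ : Matrix (Fin n) (Fin d) ℝ) (hΦ : ∀ s i, Φ s i = φ s i)
    (D W L : Matrix (Fin n) (Fin n) ℝ)
    (hD : D = Matrix.diagonal π)
    (hW : W = (1 / 2 : ℝ) • (D * P + Pᵀ * D))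
    (hL : L = D - W)
    (M : Matrix (Fin d) (Fin d) ℝ)
    (hM : M = Φᵀ * ((1 - γ) • D + γ • L) * Φ)
    (θ : EuclideanSpace ℝ (Fin d)) :
    f θ = ∑ i, ∑ j, (θ i - θstar i) * M i j * (θ j - θstar j) ∧
    HasGradientAt f
      ((WithLp.equiv 2 (Fin d → ℝ)).symm
        ((2 : ℝ) • M.mulVec (fun j => θ j - θstar j))) θ := by
  have hL' : L = markovLaplacian P π := by rw [hL, hW, hD]; rfl
  subst hD hL'
  have hΦ_mulVec (x : EuclideanSpace ℝ (Fin d)) :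
      Φ *ᵥ (fun j => x j - θstar j) = fun s => ⟪φ s, x⟫ - ⟪φ s, θstar⟫ := by
    funext s
    simp only [mulVec, dotProduct, hΦ, PiLp.inner_apply, RCLike.inner_apply, conj_trivial,
      ← sum_sub_distrib]
    exact sum_congr rfl fun i _ => by ring
  have h_quad (x : EuclideanSpace ℝ (Fin d)) :
      f x = ∑ i, ∑ j, (x i - θstar i) * M i j * (x j - θstar j) := by
    rw [← dotProduct_mulVec_eq_sum_sum, hM, ← mulVec_mulVec, ← mulVec_mulVec, dotProduct_mulVec,
      vecMul_transpose, hΦ_mulVec, add_mulVec, smul_mulVec, smul_mulVec, dotProduct_add,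
      dotProduct_smul, dotProduct_smul, dotProduct_diagonal_mulVec,
      dotProduct_markovLaplacian_mulVec P π hP1 hstat, hf, smul_eq_mul, smul_eq_mul]
  have hM_herm : M.IsHermitian := by
    rw [hM]
    simpa only [conjTranspose_eq_transpose_of_trivial] using isHermitian_conjTranspose_mul_mul Φ
      (((isHermitian_diagonal π).smul (IsSelfAdjoint.all _)).add
        ((isHermitian_markovLaplacian P π).smul (IsSelfAdjoint.all _)))
  exact ⟨h_quad θ, funext h_quad ▸ hM_herm.hasGradientAt_sum_sum θstar θ⟩

theorem stmt_9 (n d : ℕ) (hn : 1 ≤ n) (hd : 1 ≤ d)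
    (γ : ℝ) (hγ : γ ∈ Set.Ioo (0 : ℝ) 1)
    (P : Matrix (Fin n) (Fin n) ℝ)
    (hP0 : ∀ s s', 0 ≤ P s s') (hP1 : ∀ s, ∑ s', P s s' = 1)
    (π : Fin n → ℝ)
    (hπ0 : ∀ s, 0 ≤ π s) (hπ1 : ∑ s, π s = 1)
    (hstat : ∀ s', ∑ s, π s * P s s' = π s')
    (φ : Fin n → EuclideanSpace ℝ (Fin d))
    (θstar : EuclideanSpace ℝ (Fin d))
    (f : EuclideanSpace ℝ (Fin d) → ℝ)
    (hf : ∀ θ, f θ =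
      (1 - γ) * (∑ s, π s * (⟪φ s, θ⟫ - ⟪φ s, θstar⟫) ^ 2) +
      γ * ((1 / 2) * ∑ s, ∑ s', π s * P s s' *
        ((⟪φ s', θ⟫ - ⟪φ s', θstar⟫) - (⟪φ s, θ⟫ - ⟪φ s, θstar⟫)) ^ 2))
    (Φ : Matrix (Fin n) (Fin d) ℝ) (hΦ : ∀ s i, Φ s i = φ s i)
    (D W L : Matrix (Fin n) (Fin n) ℝ)
    (hD : D = Matrix.diagonal π)
    (hW : W = (1 / 2 : ℝ) • (D * P + Pᵀ * D))
    (hL : L = D - W)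
    (M : Matrix (Fin d) (Fin d) ℝ)
    (hM : M = Φᵀ * ((1 - γ) • D + γ • L) * Φ)
    (θ : EuclideanSpace ℝ (Fin d)) :
    f θ = ∑ i, ∑ j, (θ i - θstar i) * M i j * (θ j - θstar j) ∧
    HasGradientAt f
      ((WithLp.equiv 2 (Fin d → ℝ)).symm
        ((2 : ℝ) • M.mulVec (fun j => θ j - θstar j))) θ :=
  stmt_9_general n d γ P hP1 π hstat φ θstar f hf Φ hΦ D W L hD hW hL M hM θ
end

section
/- Let P : Fin n → Fin n → ℝ be row-stochastic and irreducible, meaning that for all states i, j there exists k ≥ 1 with (P^k) i j > 0, and let π : Fin n → ℝ satisfy π s > 0 for all s and ∑_s π s · P s s' = π s' for every s'. Then for every V : Fin n → ℝ, the Dirichlet seminorm vanishes, i.e. (1/2)·∑_{s,s'} π s · P s s' · (V s' − V s)² = 0, if and only if V is constant, i.e. there exists c ∈ ℝ with V s = c for all s. -/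
/-!
A sum of nonnegative terms vanishes only if each term does, so the Dirichlet form vanishes
exactly when `V` takes equal values at the two ends of every transition of positive
probability (here `π > 0` is what makes every such transition carry positive weight).
Irreducibility says that the graph of these transitions is strongly connected, so following a
path shows that `V` takes the same value everywhere.
-/

open Finset Matrix

namespace Matrix

variable {ι R α : Type*} [Ring R] [LinearOrder R] {A : Matrix ι ι R} {f : ι → α}

lemma eq_of_path_toQuiver (hf : ∀ i j, 0 < A i j → f i = f j) {i j : ι}
    (p : @Quiver.Path ι (toQuiver A) i j) : f i = f j := by
  induction p with
  | nil => rfl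
  | cons _ e ih => exact ih.trans (hf _ _ e.down)

lemma IsIrreducible.eq_of_forall_pos_imp_eq (hA : A.IsIrreducible)
    (hf : ∀ i j, 0 < A i j → f i = f j) (i j : ι) : f i = f j := by
  let := toQuiver A
  obtain ⟨p, -⟩ := hA.connected i j
  exact eq_of_path_toQuiver hf p

end Matrix

lemma sum_sum_mul_sq_sub_eq_zero_iff {ι : Type*} [Fintype ι] {w : ι → ι → ℝ}
    (hw : ∀ i j, 0 ≤ w i j) (V : ι → ℝ) :
    ∑ i, ∑ j, w i j * (V j - V i) ^ 2 = 0 ↔ ∀ i j, 0 < w i j → V i = V j := by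
  have hterm : ∀ i j, 0 ≤ w i j * (V j - V i) ^ 2 := fun i j => mul_nonneg (hw i j) (sq_nonneg _)
  simp only [sum_eq_zero_iff_of_nonneg fun i _ => sum_nonneg fun j _ => hterm i j,
    sum_eq_zero_iff_of_nonneg fun j _ => hterm _ j, mem_univ, true_implies, mul_eq_zero,
    sq_eq_zero_iff, sub_eq_zero]
  refine forall₂_congr fun i j => ⟨fun h hpos => (h.resolve_left hpos.ne').symm, fun h => ?_⟩
  rcases (hw i j).eq_or_lt with hzero | hpos
  · exact .inl hzero.symm
  · exact .inr (h hpos).symm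

theorem stmt_11_general (n : ℕ)
    (P : Matrix (Fin n) (Fin n) ℝ)
    (hP0 : ∀ s s', 0 ≤ P s s')
    (hirr : ∀ i j : Fin n, ∃ k : ℕ, 1 ≤ k ∧ 0 < (P ^ k) i j)
    (π : Fin n → ℝ)
    (hπpos : ∀ s, 0 < π s)
    (V : Fin n → ℝ) :
    (1 / 2 : ℝ) * ∑ s, ∑ s', π s * P s s' * (V s' - V s) ^ 2 = 0 ↔
      ∃ c : ℝ, ∀ s, V s = c := by
  have hP : P.IsIrreducible := (isIrreducible_iff_exists_pow_pos hP0).2 hirr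
  rw [mul_eq_zero, or_iff_right (by norm_num),
    sum_sum_mul_sq_sub_eq_zero_iff fun s s' => mul_nonneg (hπpos s).le (hP0 s s')]
  constructor
  · intro hV
    rcases isEmpty_or_nonempty (Fin n) with _ | ⟨⟨s₀⟩⟩
    · exact ⟨0, isEmptyElim⟩
    · refine ⟨V s₀, fun s => (hP.eq_of_forall_pos_imp_eq (fun i j hij => ?_) s₀ s).symm⟩
      exact hV i j (mul_pos (hπpos i) hij)
  · rintro ⟨c, hc⟩ i j -
    rw [hc, hc]

theorem stmt_11 (n : ℕ)
    (P : Matrix (Fin n) (Fin n) ℝ)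
    (hP0 : ∀ s s', 0 ≤ P s s') (hP1 : ∀ s, ∑ s', P s s' = 1)
    (hirr : ∀ i j : Fin n, ∃ k : ℕ, 1 ≤ k ∧ 0 < (P ^ k) i j)
    (π : Fin n → ℝ)
    (hπpos : ∀ s, 0 < π s)
    (hstat : ∀ s', ∑ s, π s * P s s' = π s')
    (V : Fin n → ℝ) :
    (1 / 2 : ℝ) * ∑ s, ∑ s', π s * P s s' * (V s' - V s) ^ 2 = 0 ↔
      ∃ c : ℝ, ∀ s, V s = c :=
  stmt_11_general n P hP0 hirr π hπpos V
end

section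
/- Let Φ be the n×d matrix whose s-th row is φ(s)ᵀ, let D := diag(π), and let T be the Bellman operator (T V)(s) := ∑_{s'} P s s' · (r s s' + γ·V s'). Then: (i) for every θ ∈ ℝ^d, ḡ(θ) = Φᵀ·D·(T(Φ·θ) − Φ·θ); and (ii) if the d×d matrix Φᵀ·D·Φ is invertible and θ* satisfies the projected Bellman equation Φ·θ* = Φ·(Φᵀ·D·Φ)⁻¹·Φᵀ·D·(T(Φ·θ*)), then ḡ(θ*) = 0. -/
open Finset Matrix

theorem stmt_13 (n d : ℕ) (hn : 1 ≤ n) (hd : 1 ≤ d)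
    (γ : ℝ) (hγ : γ ∈ Set.Ioo (0 : ℝ) 1)
    (P : Matrix (Fin n) (Fin n) ℝ)
    (hP0 : ∀ s s', 0 ≤ P s s') (hP1 : ∀ s, ∑ s', P s s' = 1)
    (π : Fin n → ℝ)
    (hπ0 : ∀ s, 0 ≤ π s) (hπ1 : ∑ s, π s = 1)
    (r : Fin n → Fin n → ℝ)
    (φ : Fin n → Fin d → ℝ)
    (gbar : (Fin d → ℝ) → (Fin d → ℝ))
    (hgbar : ∀ θ, gbar θ =
      ∑ s, ∑ s', (π s * P s s') • ((r s s' + γ * (φ s' ⬝ᵥ θ) - φ s ⬝ᵥ θ) • φ s))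
    (Φ : Matrix (Fin n) (Fin d) ℝ) (hΦ : ∀ s i, Φ s i = φ s i)
    (D : Matrix (Fin n) (Fin n) ℝ) (hD : D = Matrix.diagonal π)
    (T : (Fin n → ℝ) → (Fin n → ℝ))
    (hT : ∀ V s, T V s = ∑ s', P s s' * (r s s' + γ * V s')) :
    (∀ θ : Fin d → ℝ,
      gbar θ = (Φᵀ * D).mulVec (T (Φ.mulVec θ) - Φ.mulVec θ)) ∧
    (∀ θstar : Fin d → ℝ, IsUnit (Φᵀ * D * Φ) →
      Φ.mulVec θstar =
        (Φ * (Φᵀ * D * Φ)⁻¹ * Φᵀ * D).mulVec (T (Φ.mulVec θstar)) →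
      gbar θstar = 0) := by
  have key : ∀ θ : Fin d → ℝ,
      gbar θ = (Φᵀ * D).mulVec (T (Φ.mulVec θ) - Φ.mulVec θ) := by
    intro θ
    funext i
    have hmv : ∀ s, Φ.mulVec θ s = φ s ⬝ᵥ θ := by
      intro s; simp [mulVec, dotProduct, hΦ]
    rw [hgbar]
    simp only [Finset.sum_apply, Pi.smul_apply, smul_eq_mul]
    rw [mulVec]
    simp only [dotProduct, Pi.sub_apply, hT, hmv, Matrix.mul_apply, hD,
      transpose_apply, hΦ]
    have : ∀ s : Fin n,
        (∑ j, φ j i * Matrix.diagonal π j s) *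
          ((∑ s', P s s' * (r s s' + γ * (φ s' ⬝ᵥ θ))) - φ s ⬝ᵥ θ)
        = ∑ s', π s * P s s' * ((r s s' + γ * (φ s' ⬝ᵥ θ) - φ s ⬝ᵥ θ) * φ s i) := by
      intro s
      rw [Finset.sum_eq_single s (by intro b _ hb; simp [Matrix.diagonal_apply_ne π hb])
        (by simp)]
      simp only [Matrix.diagonal_apply_eq]
      rw [show (∑ s', P s s' * (r s s' + γ * (φ s' ⬝ᵥ θ))) - φ s ⬝ᵥ θ
          = ∑ s', P s s' * (r s s' + γ * (φ s' ⬝ᵥ θ) - φ s ⬝ᵥ θ) by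
            simp only [mul_sub, Finset.sum_sub_distrib, ← Finset.sum_mul, hP1, one_mul]]
      rw [Finset.mul_sum]
      congr 1; funext s'; ring
    exact Finset.sum_congr rfl fun s _ => (this s).symm
  refine ⟨key, ?_⟩
  intro θ hA heq
  rw [key θ, mulVec_sub]
  have h2 : (Φᵀ * D).mulVec (Φ.mulVec θ) = (Φᵀ * D).mulVec (T (Φ.mulVec θ)) := by
    have hdet : IsUnit (Φᵀ * D * Φ).det := (Matrix.isUnit_iff_isUnit_det _).mp hA
    conv_lhs => rw [heq, mulVec_mulVec]
    rw [show Φᵀ * D * (Φ * (Φᵀ * D * Φ)⁻¹ * Φᵀ * D) = Φᵀ * D by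
      rw [← Matrix.mul_assoc, ← Matrix.mul_assoc, ← Matrix.mul_assoc,
        Matrix.mul_nonsing_inv _ hdet, Matrix.one_mul]]
  rw [h2]; simp
end
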